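/- Let M be a faithful reduced multiplication R-module. Then the space Min(M) of minimal prime submodules, with closed sets generated by the sets V(aM) for a ∈ R, is a Hausdorff topological space with a base of open-and-closed sets. -/

import Mathlib

variable {R : Type*} [CommRing R] {M : Type*} [AddCommGroup M] [Module R M]

/-- `M` is a multiplication module: every submodule is `IM` for some ideal `I`. -/
def IsMultiplicationModule (R M : Type*) [CommRing R] [AddCommGroup M] [Module R M] : Prop :=
  ∀ N : Submodule R M, ∃ I : Ideal R, N = I • (⊤ : Submodule R M)

/-- A prime submodule. -/
def Submodule.IsPrimeSubmodule (P : Submodule R M) : Prop :=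
  P ≠ ⊤ ∧ ∀ (r : R) (m : M), r • m ∈ P → m ∈ P ∨ r ∈ P.colon ⊤

/-- `M` is reduced: the intersection of all prime submodules is zero. -/
def IsReducedModule (R M : Type*) [CommRing R] [AddCommGroup M] [Module R M] : Prop :=
  sInf {P : Submodule R M | P.IsPrimeSubmodule} = ⊥

/-- A minimal prime submodule of `M`. -/
def Submodule.IsMinimalPrime (P : Submodule R M) : Prop :=
  P.IsPrimeSubmodule ∧ ∀ Q : Submodule R M, Q.IsPrimeSubmodule → Q ≤ P → Q = P

/-- `𝔓_K`: the intersection of all minimal prime submodules containing `K`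
(equal to `M` if there are none). -/
def primeRad (K : Submodule R M) : Submodule R M :=
  sInf {P : Submodule R M | P.IsMinimalPrime ∧ K ≤ P}

/-- `V(K)`: the set of minimal prime submodules containing `K`. -/
def Vset (K : Submodule R M) : Set (Submodule R M) :=
  {P : Submodule R M | P.IsMinimalPrime ∧ K ≤ P}

/-- A quasi `z°`-submodule. -/
def IsQuasiZSubmodule (N : Submodule R M) : Prop :=
  N ≠ ⊤ ∧ ∀ a ∈ N.colon ⊤, primeRad (Ideal.span {a} • (⊤ : Submodule R M)) ≤ N

/-- `𝔓_I` for an ideal: intersection of all minimal prime ideals of `R` containing `I`. -/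
def idealPrimeRad (I : Ideal R) : Ideal R :=
  sInf {p : Ideal R | p ∈ minimalPrimes R ∧ I ≤ p}

/-- A `z°`-ideal of `R`. -/
def IsZIdeal (I : Ideal R) : Prop :=
  I ≠ ⊤ ∧ ∀ a ∈ I, idealPrimeRad (Ideal.span {a}) ≤ I

/-- `(0 :_M J)` for an ideal `J`. -/
def pointAnn (J : Ideal R) : Submodule R M where
  carrier := {m : M | ∀ j ∈ J, j • m = 0}
  zero_mem' := by intro j _; simp
  add_mem' := by
    intro a b ha hb j hj
    rw [smul_add, ha j hj, hb j hj, add_zero]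
  smul_mem' := by
    intro c m hm j hj
    rw [smul_comm, hm j hj, smul_zero]


def MinSpec (R M : Type*) [CommRing R] [AddCommGroup M] [Module R M] : Type _ :=
  {P : Submodule R M // P.IsMinimalPrime}

/-- The topology on `Min(M)` whose closed sets are generated by the sets `V(aM)`. -/
def minTop (R M : Type*) [CommRing R] [AddCommGroup M] [Module R M] :
    TopologicalSpace (MinSpec R M) :=
  TopologicalSpace.generateFrom
    {U : Set (MinSpec R M) | ∃ a : R,
      U = {P : MinSpec R M | ¬ Ideal.span {a} • (⊤ : Submodule R M) ≤ P.1}}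

/-! The sets `D(a) = {P | a ∉ (P : M)}` are the basic opens; they form a base because `(P : M)`
is prime, so `D(a) ∩ D(b) = D(ab)`. In a faithful multiplication module `q ↦ qM` inverts
`P ↦ (P : M)` on primes with `qM ≠ M`, so `(P : M)` is a minimal prime of `R` whenever `P` is a
minimal prime submodule; `R` is reduced, hence `a ∈ (P : M)` iff `a` kills some `m ∉ P`. Thus
`V(aM) = {P | ann_M(a) ⊄ P}`, which is open since `ann_M(a) = JM` makes it the union of the
`D(b)`, `b ∈ J`; so every `D(a)` is clopen. If `P ≠ Q` and `P = IM`, some `a ∈ I` lies outside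
`(Q : M)`, and the clopen `D(a)` separates `Q` from `P`. -/

open Submodule

theorem Submodule.mem_colon_top {N : Submodule R M} {a : R} :
    a ∈ N.colon ⊤ ↔ ∀ m : M, a • m ∈ N := by
  simp [mem_colon]

theorem Submodule.smul_top_le_iff_le_colon {I : Ideal R} {N : Submodule R M} :
    I • (⊤ : Submodule R M) ≤ N ↔ I ≤ N.colon ⊤ := by
  rw [smul_le]
  exact ⟨fun h r hr => mem_colon_top.2 fun m => h r hr m trivial,
    fun h r hr m _ => mem_colon_top.1 (h hr) m⟩

theorem Submodule.span_singleton_smul_top_le_iff {a : R} {N : Submodule R M} :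
    Ideal.span {a} • (⊤ : Submodule R M) ≤ N ↔ a ∈ N.colon ⊤ := by
  rw [smul_top_le_iff_le_colon, Ideal.span_singleton_le_iff_mem]

theorem Submodule.IsPrimeSubmodule.colon_isPrime {P : Submodule R M} (hP : P.IsPrimeSubmodule) :
    (P.colon ⊤).IsPrime := by
  refine ⟨fun h => hP.1 (eq_top_iff.2 fun m _ => ?_), fun {a b} hab => ?_⟩
  · simpa using mem_colon_top.1 (h ▸ Submodule.mem_top : (1 : R) ∈ P.colon ⊤) m
  · refine or_iff_not_imp_left.2 fun ha => mem_colon_top.2 fun m => ?_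
    exact (hP.2 a (b • m) (by simpa [smul_smul] using mem_colon_top.1 hab m)).resolve_right ha

theorem eq_zero_of_forall_smul_eq_zero (hfaithful : (⊥ : Submodule R M).colon ⊤ = ⊥) {r : R}
    (h : ∀ m : M, r • m = 0) : r = 0 := by
  rw [← Ideal.mem_bot, ← hfaithful, mem_colon_top]
  exact fun m => (h m).symm ▸ zero_mem _

theorem IsReducedModule.isReduced (hfaithful : (⊥ : Submodule R M).colon ⊤ = ⊥)
    (hred : IsReducedModule R M) : IsReduced R := by
  refine ⟨fun a ⟨n, ha⟩ => ?_⟩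
  have hmem : ∀ m : M, a • m ∈ sInf {P : Submodule R M | P.IsPrimeSubmodule} := fun m =>
    mem_sInf.2 fun P hP => mem_colon_top.1
      (hP.colon_isPrime.mem_of_pow_mem n (by simp [ha])) m
  exact eq_zero_of_forall_smul_eq_zero hfaithful fun m => (mem_bot R).1 (hred ▸ hmem m)

theorem Ideal.exists_notMem_mul_eq_zero_of_mem_minimalPrimes {R : Type*} [CommRing R]
    [IsReduced R] {p : Ideal R} (hp : p ∈ minimalPrimes R) {x : R} (hx : x ∈ p) :
    ∃ s ∉ p, x * s = 0 := by
  have := Ideal.IsMinimalPrime.isPrime hp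
  have h := IsLocalization.AtPrime.radical_map_of_mem_minimalPrimes (Localization.AtPrime p) p ⊥ hp
  rw [Ideal.map_bot, Ideal.radical_bot_of_isReduced] at h
  have : algebraMap R (Localization.AtPrime p) x = 0 := by
    rw [← Ideal.mem_bot, h]; exact Ideal.mem_map_of_mem _ hx
  obtain ⟨⟨s, hs⟩, hsx⟩ := (IsLocalization.map_eq_zero_iff p.primeCompl _ x).1 this
  exact ⟨s, hs, by rw [mul_comm]; exact hsx⟩

namespace IsMultiplicationModule

theorem exists_smul_mem_span_singleton (hmul : IsMultiplicationModule R M) {q : Ideal R}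
    (hq : q • (⊤ : Submodule R M) ≠ ⊤) : ∃ s ∉ q, ∃ m₀ : M, ∀ x : M, s • x ∈ R ∙ m₀ := by
  obtain ⟨m₀, hm₀⟩ : ∃ m₀ : M, m₀ ∉ q • (⊤ : Submodule R M) := by
    by_contra! h
    exact hq (eq_top_iff'.2 h)
  obtain ⟨I, hI⟩ := hmul (R ∙ m₀)
  obtain ⟨s, hsI, hsq⟩ : ∃ s ∈ I, s ∉ q := SetLike.not_le_iff_exists.1 fun hIq =>
    hm₀ (smul_mono_left hIq (hI ▸ mem_span_singleton_self m₀))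
  exact ⟨s, hsq, m₀, fun x => hI ▸ smul_mem_smul hsI mem_top⟩

/-- Some `s ∉ q` maps `M` into a cyclic submodule `R m₀`; from `s a m₀ = t m₀` with `t ∈ q`,
faithfulness gives `s (s a - t) = 0`, hence `s² a ∈ q`. -/
theorem colon_smul_top_eq (hfaithful : (⊥ : Submodule R M).colon ⊤ = ⊥)
    (hmul : IsMultiplicationModule R M) {q : Ideal R} (hq : q.IsPrime)
    (hne : q • (⊤ : Submodule R M) ≠ ⊤) : (q • (⊤ : Submodule R M)).colon ⊤ = q := by
  refine le_antisymm (fun a ha => ?_) (smul_top_le_iff_le_colon.1 le_rfl)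
  obtain ⟨s, hsq, m₀, hs⟩ := hmul.exists_smul_mem_span_singleton hne
  have hs_smul : q • (⊤ : Submodule R M) ≤ (q • (R ∙ m₀)).comap (LinearMap.lsmul R M s) :=
    smul_le.2 fun b hb x _ => by
      rw [mem_comap, LinearMap.lsmul_apply, smul_comm]
      exact smul_mem_smul hb (hs x)
  obtain ⟨t, htq, ht⟩ := mem_smul_span_singleton.1 (hs_smul (mem_colon_top.1 ha m₀))
  rw [LinearMap.lsmul_apply] at ht
  have hzero : s * (s * a - t) = 0 := eq_zero_of_forall_smul_eq_zero hfaithful fun x => by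
    obtain ⟨c, hc⟩ := mem_span_singleton.1 (hs x)
    rw [mul_comm, mul_smul, ← hc, smul_comm, sub_smul, mul_smul, ← ht, sub_self, smul_zero]
  have hssa : s * (s * a) ∈ q := by
    rw [mul_sub, sub_eq_zero] at hzero
    exact hzero ▸ q.mul_mem_left s htq
  exact (hq.mem_or_mem ((hq.mem_or_mem hssa).resolve_left hsq)).resolve_left hsq

theorem isPrimeSubmodule_smul_top (hfaithful : (⊥ : Submodule R M).colon ⊤ = ⊥)
    (hmul : IsMultiplicationModule R M) {q : Ideal R} (hq : q.IsPrime)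
    (hne : q • (⊤ : Submodule R M) ≠ ⊤) : (q • (⊤ : Submodule R M)).IsPrimeSubmodule := by
  have hcolon := colon_smul_top_eq hfaithful hmul hq hne
  refine ⟨hne, fun r m hrm => or_iff_not_imp_right.2 fun hr => ?_⟩
  rw [hcolon] at hr
  obtain ⟨I, hI⟩ := hmul (R ∙ m)
  have hIq : I ≤ q := fun i hi => by
    refine (hq.mem_or_mem (hcolon ▸ mem_colon_top.2 fun x => ?_)).resolve_left hr
    obtain ⟨c, hc⟩ := mem_span_singleton.1 (hI ▸ smul_mem_smul hi mem_top : i • x ∈ R ∙ m)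
    rw [mul_smul, ← hc, smul_comm]
    exact smul_mem _ c hrm
  exact smul_mono_left hIq (hI ▸ mem_span_singleton_self m)

end IsMultiplicationModule

theorem Submodule.IsMinimalPrime.colon_mem_minimalPrimes
    (hfaithful : (⊥ : Submodule R M).colon ⊤ = ⊥) (hmul : IsMultiplicationModule R M)
    {P : Submodule R M} (hP : P.IsMinimalPrime) : P.colon ⊤ ∈ minimalPrimes R := by
  refine ⟨⟨hP.1.colon_isPrime, bot_le⟩, fun q ⟨hq, _⟩ hqP => ?_⟩
  have hle : q • (⊤ : Submodule R M) ≤ P := smul_top_le_iff_le_colon.2 hqP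
  have hne : q • (⊤ : Submodule R M) ≠ ⊤ := fun h => hP.1.1 (top_le_iff.1 (h ▸ hle))
  rw [← hmul.colon_smul_top_eq hfaithful hq hne,
    hP.2 _ (hmul.isPrimeSubmodule_smul_top hfaithful hq hne) hle]

theorem Submodule.IsMinimalPrime.exists_smul_eq_zero_notMem
    (hfaithful : (⊥ : Submodule R M).colon ⊤ = ⊥) (hmul : IsMultiplicationModule R M)
    (hred : IsReducedModule R M) {P : Submodule R M} (hP : P.IsMinimalPrime) {a : R}
    (ha : a ∈ P.colon ⊤) : ∃ m : M, a • m = 0 ∧ m ∉ P := by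
  have := hred.isReduced hfaithful
  obtain ⟨s, hs, has⟩ := Ideal.exists_notMem_mul_eq_zero_of_mem_minimalPrimes
    (hP.colon_mem_minimalPrimes hfaithful hmul) ha
  obtain ⟨m, hm⟩ := not_forall.1 (mt mem_colon_top.2 hs)
  exact ⟨s • m, by rw [smul_smul, has, zero_smul], hm⟩

attribute [local instance] minTop

namespace MinSpec

variable (M) in
def basicOpen (a : R) : Set (MinSpec R M) :=
  {P | ¬ Ideal.span {a} • (⊤ : Submodule R M) ≤ P.1}

theorem mem_basicOpen {a : R} {P : MinSpec R M} : P ∈ basicOpen M a ↔ a ∉ P.1.colon ⊤ :=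
  not_congr span_singleton_smul_top_le_iff

theorem isOpen_basicOpen (a : R) : IsOpen (basicOpen M a) :=
  TopologicalSpace.GenerateOpen.basic _ ⟨a, rfl⟩

theorem basicOpen_mul (a b : R) : basicOpen M (a * b) = basicOpen M a ∩ basicOpen M b := by
  ext P
  simp only [Set.mem_inter_iff, mem_basicOpen, P.2.1.colon_isPrime.mul_mem_iff_mem_or_mem, not_or]

theorem basicOpen_one : basicOpen M (1 : R) = Set.univ :=
  Set.eq_univ_of_forall fun P => mem_basicOpen.2 P.2.1.colon_isPrime.one_notMem

theorem isOpen_setOf_not_le (hmul : IsMultiplicationModule R M) (N : Submodule R M) :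
    IsOpen {P : MinSpec R M | ¬ N ≤ P.1} := by
  obtain ⟨I, rfl⟩ := hmul N
  have hunion : {P : MinSpec R M | ¬ I • ⊤ ≤ P.1} = ⋃ a ∈ I, basicOpen M a := by
    ext P
    simp [mem_basicOpen, smul_top_le_iff_le_colon, SetLike.not_le_iff_exists]
  rw [hunion]
  exact isOpen_biUnion fun a _ => isOpen_basicOpen a

theorem compl_basicOpen (hfaithful : (⊥ : Submodule R M).colon ⊤ = ⊥)
    (hmul : IsMultiplicationModule R M) (hred : IsReducedModule R M) (a : R) :
    (basicOpen M a)ᶜ = {P | ¬ LinearMap.ker (LinearMap.lsmul R M a) ≤ P.1} := by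
  ext P
  simp only [Set.mem_compl_iff, mem_basicOpen, not_not, Set.mem_ofPred_eq,
    SetLike.not_le_iff_exists, LinearMap.mem_ker, LinearMap.lsmul_apply]
  refine ⟨P.2.exists_smul_eq_zero_notMem hfaithful hmul hred, fun ⟨m, hm, hmP⟩ => ?_⟩
  exact (P.2.1.2 a m (hm ▸ P.1.zero_mem)).resolve_left hmP

theorem isClopen_basicOpen (hfaithful : (⊥ : Submodule R M).colon ⊤ = ⊥)
    (hmul : IsMultiplicationModule R M) (hred : IsReducedModule R M) (a : R) :
    IsClopen (basicOpen M a) := by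
  refine ⟨isOpen_compl_iff.1 ?_, isOpen_basicOpen a⟩
  rw [compl_basicOpen hfaithful hmul hred]
  exact isOpen_setOf_not_le hmul _

theorem isTopologicalBasis_basicOpen :
    TopologicalSpace.IsTopologicalBasis (Set.range (basicOpen (R := R) M)) := by
  refine ⟨?_, ?_, ?_⟩
  · rintro _ ⟨a, rfl⟩ _ ⟨b, rfl⟩ P hP
    exact ⟨_, ⟨a * b, rfl⟩, (basicOpen_mul a b).ge hP, (basicOpen_mul a b).le⟩
  · exact Set.sUnion_eq_univ_iff.2 fun P =>
      ⟨basicOpen M 1, ⟨1, rfl⟩, basicOpen_one.ge (Set.mem_univ P)⟩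
  · simp only [minTop, Set.range, eq_comm]
    rfl

theorem t2Space (hfaithful : (⊥ : Submodule R M).colon ⊤ = ⊥)
    (hmul : IsMultiplicationModule R M) (hred : IsReducedModule R M) : T2Space (MinSpec R M) := by
  refine ⟨fun P Q hPQ => ?_⟩
  obtain ⟨I, hI⟩ := hmul P.1
  have hPQ' : ¬ I ≤ Q.1.colon ⊤ := by
    rw [← smul_top_le_iff_le_colon, ← hI]
    exact fun h => hPQ (Subtype.ext (Q.2.2 P.1 P.2.1 h))
  obtain ⟨a, haI, haQ⟩ := SetLike.not_le_iff_exists.1 hPQ'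
  have hPa : P ∉ basicOpen M a := fun h =>
    mem_basicOpen.1 h (smul_top_le_iff_le_colon.1 hI.ge haI)
  exact ⟨_, _, (isClopen_basicOpen hfaithful hmul hred a).1.isOpen_compl, isOpen_basicOpen a,
    hPa, mem_basicOpen.2 haQ, disjoint_compl_left⟩

end MinSpec

theorem stmt2 (hfaithful : (⊥ : Submodule R M).colon ⊤ = ⊥)
    (hmul : IsMultiplicationModule R M) (hred : IsReducedModule R M) :
    @T2Space (MinSpec R M) (minTop R M) ∧
      ∃ B : Set (Set (MinSpec R M)),
        @TopologicalSpace.IsTopologicalBasis (MinSpec R M) (minTop R M) B ∧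
          ∀ s ∈ B, @IsOpen (MinSpec R M) (minTop R M) s ∧
            @IsClosed (MinSpec R M) (minTop R M) s :=
  ⟨MinSpec.t2Space hfaithful hmul hred, Set.range (MinSpec.basicOpen M),
    MinSpec.isTopologicalBasis_basicOpen, Set.forall_mem_range.2 fun a =>
      ⟨MinSpec.isOpen_basicOpen a, (MinSpec.isClopen_basicOpen hfaithful hmul hred a).1⟩⟩
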